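/- Let P, Q be probability measures on X with densities p, q with respect to M, and V := ∫|p−q| dM. Then the Pearson chi-squared divergence χ²(P,Q) := ∫ (p−q)²/q dM (with the convention that the integrand is ∞·𝟙[p>0] when q = 0) satisfies χ²(P,Q) ≥ V² when V < 1 and χ²(P,Q) ≥ V/(2−V) when 1 ≤ V < 2. -/

import Mathlib

/-!
Writing `d = p - q`, both bounds come from integrating a pointwise inequality
`a |d| + b d + c q ≤ k d² / q` against `M`: since `∫ |d| = V`, `∫ d = 0` and `∫ q = 1`,
it yields `a V + c ≤ k χ²(P, Q)`. For `V < 1` the inequality is AM–GM,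
`2 V |d| - V² q ≤ d² / q`. For `V ≥ 1` it is
`2 |d| - 2 (V - 1)² d - V² q ≤ (2 - V)² d² / q`, a quadratic inequality in `d` which for
`d ≥ 0` is a perfect square and for `-q ≤ d < 0` holds since `d` lies between the roots `-q` and
`-V² q / (2 - V)²`; this gives `2 V - V² ≤ (2 - V)² χ²`.
-/

open MeasureTheory

/-- The integrand `t f(s / t)`, `f u = (u - 1)²`, of the χ²-divergence. -/
noncomputable def chiSqIntegrand (s t : ℝ) : ENNReal :=
  if t = 0 then (if 0 < s then ⊤ else 0) else ENNReal.ofReal ((s - t) ^ 2 / t)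

-- At `t = s = 0` the right-hand side is `ofReal (0 / 0) = 0`, matching the definition.
lemma chiSqIntegrand_eq_ofReal {s t : ℝ} (h : t = 0 → s = 0) :
    chiSqIntegrand s t = ENNReal.ofReal ((s - t) ^ 2 / t) := by
  by_cases ht : t = 0 <;> simp [chiSqIntegrand, ht, h]

lemma two_mul_mul_abs_sub_sq_mul_le_sq_div (v d : ℝ) {t : ℝ} (ht : 0 < t) :
    2 * v * |d| - v ^ 2 * t ≤ d ^ 2 / t := by
  rw [le_div_iff₀ ht]
  nlinarith [sq_nonneg (|d| - v * t), sq_abs d]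

lemma le_sq_mul_sq_sub_div_of_one_le {v s t : ℝ} (hv : 1 ≤ v) (hs : 0 ≤ s) (ht : 0 < t) :
    2 * |s - t| - 2 * (v - 1) ^ 2 * (s - t) - v ^ 2 * t ≤ (2 - v) ^ 2 * ((s - t) ^ 2 / t) := by
  rw [mul_div_assoc', le_div_iff₀ ht]
  rcases abs_cases (s - t) with ⟨h, _⟩ | ⟨h, _⟩ <;> rw [h]
  · nlinarith [sq_nonneg ((2 - v) * (s - t) - v * t)]
  · nlinarith [mul_nonneg (sub_nonneg.2 hv) (mul_nonneg hs ht.le), sq_nonneg ((2 - v) * s)]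

section

variable {X : Type*} [MeasurableSpace X] {M : Measure X}

lemma lintegral_eq_one_of_isProbabilityMeasure_withDensity {f : X → ENNReal}
    [IsProbabilityMeasure (M.withDensity f)] : ∫⁻ x, f x ∂M = 1 := by
  simpa [withDensity_apply _ MeasurableSet.univ] using measure_univ (μ := M.withDensity f)

variable {p q : X → ℝ}

lemma integrable_of_isProbabilityMeasure_withDensity (hpm : AEStronglyMeasurable p M)
    (hp0 : 0 ≤ᵐ[M] p) [IsProbabilityMeasure (M.withDensity fun x => ENNReal.ofReal (p x))] :
    Integrable p M := by
  rw [← lintegral_ofReal_ne_top_iff_integrable hpm hp0,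
    lintegral_eq_one_of_isProbabilityMeasure_withDensity]
  exact ENNReal.one_ne_top

lemma integral_eq_one_of_isProbabilityMeasure_withDensity (hpm : AEStronglyMeasurable p M)
    (hp0 : 0 ≤ᵐ[M] p) [IsProbabilityMeasure (M.withDensity fun x => ENNReal.ofReal (p x))] :
    ∫ x, p x ∂M = 1 := by
  rw [integral_eq_lintegral_of_nonneg_ae hp0 hpm,
    lintegral_eq_one_of_isProbabilityMeasure_withDensity, ENNReal.toReal_one]

lemma Measurable.chiSqIntegrand (hpm : Measurable p) (hqm : Measurable q) :
    Measurable fun x => chiSqIntegrand (p x) (q x) :=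
  .ite (hqm (measurableSet_singleton 0))
    (.ite (measurableSet_lt measurable_const hpm) measurable_const measurable_const)
    (ENNReal.measurable_ofReal.comp (((hpm.sub hqm).pow_const 2).div hqm))

lemma ae_eq_zero_of_lintegral_chiSqIntegrand_ne_top (hpm : Measurable p) (hqm : Measurable q)
    (hp0 : ∀ x, 0 ≤ p x) (h : ∫⁻ x, chiSqIntegrand (p x) (q x) ∂M ≠ ⊤) :
    ∀ᵐ x ∂M, q x = 0 → p x = 0 := by
  filter_upwards [ae_lt_top (hpm.chiSqIntegrand hqm) h] with x hx hqx
  by_contra hpx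
  simp [chiSqIntegrand, hqx, (hp0 x).lt_of_ne' hpx] at hx

theorem ofReal_div_le_lintegral_chiSqIntegrand (hpm : Measurable p) (hqm : Measurable q)
    (hp0 : ∀ x, 0 ≤ p x) (hq0 : ∀ x, 0 ≤ q x) (hip : Integrable p M) (hiq : Integrable q M)
    (hp1 : ∫ x, p x ∂M = 1) (hq1 : ∫ x, q x ∂M = 1) (a b c : ℝ) {k : ℝ} (hk : 0 < k)
    (hpt : ∀ s t, 0 ≤ s → 0 < t →
      a * |s - t| + b * (s - t) + c * t ≤ k * ((s - t) ^ 2 / t)) :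
    ENNReal.ofReal ((a * ∫ x, |p x - q x| ∂M + c) / k)
      ≤ ∫⁻ x, chiSqIntegrand (p x) (q x) ∂M := by
  by_cases htop : ∫⁻ x, chiSqIntegrand (p x) (q x) ∂M = ⊤
  · exact htop ▸ le_top
  set g : X → ℝ := fun x => (p x - q x) ^ 2 / q x
  have hae := ae_eq_zero_of_lintegral_chiSqIntegrand_ne_top hpm hqm hp0 htop
  have hF : (fun x => chiSqIntegrand (p x) (q x)) =ᵐ[M] fun x => ENNReal.ofReal (g x) := by
    filter_upwards [hae] with x hx using chiSqIntegrand_eq_ofReal hx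
  have hg0 : 0 ≤ᵐ[M] g := ae_of_all _ fun x => div_nonneg (sq_nonneg _) (hq0 x)
  have hgm : Measurable g := ((hpm.sub hqm).pow_const 2).div hqm
  have hig : Integrable g M := by
    rw [← lintegral_ofReal_ne_top_iff_integrable hgm.aestronglyMeasurable hg0,
      ← lintegral_congr_ae hF]
    exact htop
  have hpt_ae : ∀ᵐ x ∂M, a * |p x - q x| + b * (p x - q x) + c * q x ≤ k * g x := by
    filter_upwards [hae] with x hx
    rcases (hq0 x).eq_or_lt with hqx | hqx
    · simp [g, ← hqx, hx hqx.symm]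
    · exact hpt _ _ (hp0 x) hqx
  have hid : Integrable (fun x => p x - q x) M := hip.sub hiq
  have hlhs : Integrable (fun x => a * |p x - q x| + b * (p x - q x)) M :=
    (hid.abs.const_mul a).add (hid.const_mul b)
  have hlin : ∫ x, (a * |p x - q x| + b * (p x - q x) + c * q x) ∂M
      = a * ∫ x, |p x - q x| ∂M + c := by
    rw [integral_add hlhs (hiq.const_mul c),
      integral_add (hid.abs.const_mul a) (hid.const_mul b), integral_const_mul,
      integral_const_mul, integral_const_mul, integral_sub hip hiq, hp1, hq1]
    ring
  rw [lintegral_congr_ae hF, ← ofReal_integral_eq_lintegral_ofReal hig hg0]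
  refine ENNReal.ofReal_le_ofReal ((div_le_iff₀' hk).2 ?_)
  calc a * ∫ x, |p x - q x| ∂M + c
      = ∫ x, (a * |p x - q x| + b * (p x - q x) + c * q x) ∂M := hlin.symm
    _ ≤ ∫ x, k * g x ∂M :=
      integral_mono_ae (hlhs.add (hiq.const_mul c)) (hig.const_mul k) hpt_ae
    _ = k * ∫ x, g x ∂M := integral_const_mul k g

end

theorem chi_squared_pinsker_general {X : Type*} [MeasurableSpace X]
    (M P Q : Measure X) [IsProbabilityMeasure P]
    [IsProbabilityMeasure Q] (p q : X → ℝ) (hpm : Measurable p) (hqm : Measurable q)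
    (hp0 : ∀ x, 0 ≤ p x) (hq0 : ∀ x, 0 ≤ q x)
    (hP : P = M.withDensity (fun x => ENNReal.ofReal (p x)))
    (hQ : Q = M.withDensity (fun x => ENNReal.ofReal (q x))) :
    ((∫ x, |p x - q x| ∂M) < 1 →
      ENNReal.ofReal ((∫ x, |p x - q x| ∂M) ^ 2)
        ≤ ∫⁻ x, (if q x = 0 then (if 0 < p x then ⊤ else 0)
            else ENNReal.ofReal ((p x - q x) ^ 2 / q x)) ∂M) ∧
    (1 ≤ (∫ x, |p x - q x| ∂M) → (∫ x, |p x - q x| ∂M) < 2 →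
      ENNReal.ofReal ((∫ x, |p x - q x| ∂M) / (2 - ∫ x, |p x - q x| ∂M))
        ≤ ∫⁻ x, (if q x = 0 then (if 0 < p x then ⊤ else 0)
            else ENNReal.ofReal ((p x - q x) ^ 2 / q x)) ∂M) := by
  subst hP hQ
  have hpm' := hpm.aestronglyMeasurable (μ := M)
  have hqm' := hqm.aestronglyMeasurable (μ := M)
  have bound := ofReal_div_le_lintegral_chiSqIntegrand (M := M) hpm hqm hp0 hq0
    (integrable_of_isProbabilityMeasure_withDensity hpm' (ae_of_all _ hp0))
    (integrable_of_isProbabilityMeasure_withDensity hqm' (ae_of_all _ hq0))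
    (integral_eq_one_of_isProbabilityMeasure_withDensity hpm' (ae_of_all _ hp0))
    (integral_eq_one_of_isProbabilityMeasure_withDensity hqm' (ae_of_all _ hq0))
  generalize ∫ x, |p x - q x| ∂M = V at bound ⊢
  constructor
  · intro _
    calc ENNReal.ofReal (V ^ 2) = ENNReal.ofReal ((2 * V * V + -V ^ 2) / 1) := by
          congr 1; ring
      _ ≤ _ := bound (2 * V) 0 (-V ^ 2) one_pos fun s t _ ht => by
          linarith [two_mul_mul_abs_sub_sq_mul_le_sq_div V (s - t) ht]
  · intro hV1 hV2
    have hV : 0 < 2 - V := sub_pos.2 hV2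
    calc ENNReal.ofReal (V / (2 - V))
        = ENNReal.ofReal ((2 * V + -V ^ 2) / (2 - V) ^ 2) := by
          congr 1; field_simp; ring
      _ ≤ _ := bound 2 (-2 * (V - 1) ^ 2) (-V ^ 2) (pow_pos hV 2) fun s t hs ht => by
          linarith [le_sq_mul_sq_sub_div_of_one_le hV1 hs ht]

/-- Tight Pinsker-type inequality for the Pearson chi-squared divergence:
`χ²(P,Q) ≥ V²` when `V < 1`, and `χ²(P,Q) ≥ V/(2-V)` when `1 ≤ V < 2`. -/
theorem chi_squared_pinsker {X : Type*} [MeasurableSpace X]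
    (M P Q : Measure X) [IsProbabilityMeasure M] [IsProbabilityMeasure P]
    [IsProbabilityMeasure Q] (p q : X → ℝ) (hpm : Measurable p) (hqm : Measurable q)
    (hp0 : ∀ x, 0 ≤ p x) (hq0 : ∀ x, 0 ≤ q x)
    (hP : P = M.withDensity (fun x => ENNReal.ofReal (p x)))
    (hQ : Q = M.withDensity (fun x => ENNReal.ofReal (q x))) :
    ((∫ x, |p x - q x| ∂M) < 1 →
      ENNReal.ofReal ((∫ x, |p x - q x| ∂M) ^ 2)
        ≤ ∫⁻ x, (if q x = 0 then (if 0 < p x then ⊤ else 0)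
            else ENNReal.ofReal ((p x - q x) ^ 2 / q x)) ∂M) ∧
    (1 ≤ (∫ x, |p x - q x| ∂M) → (∫ x, |p x - q x| ∂M) < 2 →
      ENNReal.ofReal ((∫ x, |p x - q x| ∂M) / (2 - ∫ x, |p x - q x| ∂M))
        ≤ ∫⁻ x, (if q x = 0 then (if 0 < p x then ⊤ else 0)
            else ENNReal.ofReal ((p x - q x) ^ 2 / q x)) ∂M) :=
  chi_squared_pinsker_general M P Q p q hpm hqm hp0 hq0 hP hQ
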